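/- arXiv:2005.07257 — 2 statements merged into one kernel-verified Lean document; each statement's English description precedes it below -/
import Mathlib

section
/- Assume w is differentiable, let C ∈ (0, C*), and suppose that for every s in S_C := {s ≥ 0 : w(s) ≤ C} one has Bᵀ·diag(α)^{-1}·∇w(s) ≤ c entrywise with strict inequality in at least one coordinate. Then every feasible point (s_L, p_L, y_L, U_L) of problem (P_R3)(C) attaining f_L(C) satisfies w(s_L) = C. Moreover, if this condition holds for every s ∈ S_{C*} := {s ≥ 0 : w(s) ≤ C*}, then f_0* = C*. -/
/-!
Part one is a first-order argument: at an optimum with slack budget, moving an amount `t` of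
`p_{i}` into the control along `diag(α)⁻¹ B e_{i}` keeps every constraint of (P_R3) (after
shifting `y` by a constant), changes `w` by `t ∇w(s) ⬝ diag(α)⁻¹ B e_{i} + o(t)` and saves
`t c_{i}`, so the hypothesis on `Bᵀ diag(α)⁻¹ ∇w` at a strict coordinate `i` gives a better point.

For part two, a supercritical `s` with endemic state `p` becomes critical after adding
`diag(α)⁻¹ B p`, because `(α s + δ + B p) ∘ p = B p` and a positive subinvariant vector bounds the
spectral radius. Along the segment to that point `w` crosses `C*`, and the gradient inequality of
the convex `w` at the crossing point bounds the loss by `cᵀ p`.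
-/

noncomputable section

open Matrix

/-- Irreducibility of a nonnegative matrix. -/
def MatIrred {N : ℕ} (B : Matrix (Fin N) (Fin N) ℝ) : Prop :=
  ∀ i j, ∃ k : ℕ, 1 ≤ k ∧ 0 < (B ^ k) i j

/-- Spectral radius of a real matrix: the maximum modulus of its complex eigenvalues. -/
def specRad {N : ℕ} (A : Matrix (Fin N) (Fin N) ℝ) : ℝ :=
  sSup ((fun μ : ℂ => ‖μ‖) '' spectrum ℂ (A.map Complex.ofReal))

/-- `ρ(s)`: the spectral radius of `diag(α∘s + δ)⁻¹ B`. -/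
def rhoS {N : ℕ} (B : Matrix (Fin N) (Fin N) ℝ) (α δ : Fin N → ℝ)
    (s : Fin N → ℝ) : ℝ :=
  specRad (Matrix.diagonal (fun i => (α i * s i + δ i)⁻¹) * B)

/-- Feasibility for the convex relaxation (P_R3) with budget `C`. -/
def FeasPR3 {N : ℕ} (w : (Fin N → ℝ) → ℝ) (B : Matrix (Fin N) (Fin N) ℝ)
    (α δ : Fin N → ℝ) (C : ℝ)
    (s p y : Fin N → ℝ) (U : Matrix (Fin N) (Fin N) ℝ) : Prop :=
  (∀ i, 0 ≤ s i) ∧ (∀ i, 0 ≤ y i) ∧ w s ≤ C ∧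
  (∀ i, ∑ j, U i j = B.mulVec p i + α i * s i + δ i) ∧
  (∀ i, Real.exp (-(y i)) ≤ p i) ∧
  (∀ i j, Real.exp (y i) * B i j * Real.exp (-(y j)) ≤ U i j)

open Filter Set Topology

lemma ContinuousLinearMap.apply_eq_sum_mul_single {ι : Type*} [Fintype ι] [DecidableEq ι]
    (f : (ι → ℝ) →L[ℝ] ℝ) (v : ι → ℝ) : f v = ∑ j, v j * f (Pi.single j 1) := by
  conv_lhs => rw [pi_eq_sum_univ' v]
  simp only [map_sum, map_smul, smul_eq_mul]

lemma ContinuousLinearMap.apply_mul_mulVec {ι : Type*} [Fintype ι] [DecidableEq ι]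
    (f : (ι → ℝ) →L[ℝ] ℝ) (d p : ι → ℝ) (B : Matrix ι ι ℝ) :
    f (d * B *ᵥ p) = ∑ i, p i * ∑ j, B j i * d j * f (Pi.single j 1) := by
  rw [f.apply_eq_sum_mul_single]
  simp only [Pi.mul_apply, mulVec, dotProduct, Finset.mul_sum, Finset.sum_mul]
  rw [Finset.sum_comm]
  exact Finset.sum_congr rfl fun i _ => Finset.sum_congr rfl fun j _ => by ring

lemma ConvexOn.fderiv_apply_sub_le {E : Type*} [NormedAddCommGroup E] [NormedSpace ℝ E]
    {f : E → ℝ} (hf : ConvexOn ℝ univ f) {x : E} (hfx : DifferentiableAt ℝ f x) (y : E) :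
    fderiv ℝ f x (y - x) ≤ f y - f x := by
  have hline : HasDerivAt (f ∘ AffineMap.lineMap (k := ℝ) x y) (fderiv ℝ f x (y - x)) 0 := by
    refine HasFDerivAt.comp_hasDerivAt (0 : ℝ) ?_ AffineMap.hasDerivAt_lineMap
    simpa using hfx.hasFDerivAt
  have := (hf.comp_affineMap (AffineMap.lineMap x y)).le_slope_of_hasDerivAt
    (mem_univ 0) (mem_univ 1) zero_lt_one hline
  simpa [slope_def_field] using this

lemma ConvexOn.le_add_of_fderiv_le_at_level {E : Type*} [NormedAddCommGroup E] [NormedSpace ℝ E]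
    {f : E → ℝ} (hf : ConvexOn ℝ univ f) (hfd : Differentiable ℝ f) {x Δ : E} {K M : ℝ}
    (hM : 0 ≤ M) (hK : K ≤ f (x + Δ))
    (hder : ∀ t ∈ Icc (0 : ℝ) 1, f (x + t • Δ) = K → fderiv ℝ f (x + t • Δ) Δ ≤ M) :
    K ≤ f x + M := by
  by_cases hx : K ≤ f x
  · linarith
  have hcont : ContinuousOn (fun t : ℝ => f (x + t • Δ)) (Icc 0 1) :=
    hfd.continuous.comp_continuousOn (by fun_prop)
  obtain ⟨t, ht, hft⟩ := intermediate_value_Icc zero_le_one hcont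
    ⟨by simpa using (not_le.1 hx).le, by simpa using hK⟩
  have hgrad := hf.fderiv_apply_sub_le (hfd (x + t • Δ)) x
  rw [show x - (x + t • Δ) = (-t) • Δ by module, map_smul, smul_eq_mul] at hgrad
  have := hder t ht hft
  nlinarith [ht.1, ht.2]

lemma DifferentiableAt.exists_lt_add_mul_of_fderiv_lt {E : Type*} [NormedAddCommGroup E]
    [NormedSpace ℝ E] {f : E → ℝ} {x Δ : E} (hf : DifferentiableAt ℝ f x) {a C ε : ℝ}
    (ha : fderiv ℝ f x Δ < a) (hC : f x < C) (hε : 0 < ε) :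
    ∃ t ∈ Ioo 0 ε, f (x + t • Δ) < C ∧ f (x + t • Δ) < f x + t * a := by
  have hline : HasDerivAt (fun t : ℝ => f (x + t • Δ)) (fderiv ℝ f x Δ) 0 := by
    have hx : HasFDerivAt f (fderiv ℝ f x) (x + (0 : ℝ) • Δ) := by
      simpa using hf.hasFDerivAt
    have := hx.comp_hasDerivAt 0 (((hasDerivAt_id (0 : ℝ)).smul_const Δ).const_add x)
    rwa [one_smul] at this
  have hslope : ∀ᶠ t in 𝓝[>] (0 : ℝ), slope (fun t : ℝ => f (x + t • Δ)) 0 t < a :=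
    hline.hasDerivWithinAt.limsup_slope_le' self_notMem_Ioi ha
  have hbelow : ∀ᶠ t in 𝓝[>] (0 : ℝ), f (x + t • Δ) < C := by
    refine (Tendsto.eventually_lt_const ?_ hline.continuousAt.tendsto).filter_mono
      nhdsWithin_le_nhds
    simpa using hC
  have hsmall : ∀ᶠ t in 𝓝[>] (0 : ℝ), t ∈ Ioo 0 ε := Ioo_mem_nhdsGT hε
  obtain ⟨t, hts, htC, ht⟩ := (hslope.and (hbelow.and hsmall)).exists
  rw [slope_def_field, sub_zero, div_lt_iff₀ ht.1, zero_smul, add_zero] at hts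
  exact ⟨t, ht, htC, by linarith⟩

lemma Matrix.exists_mulVec_eq_smul_of_mem_spectrum {n K : Type*} [Fintype n] [DecidableEq n]
    [Field K] {A : Matrix n n K} {μ : K} (hμ : μ ∈ spectrum K A) :
    ∃ v ≠ 0, A *ᵥ v = μ • v := by
  rw [← spectrum_toLin', ← Module.End.hasEigenvalue_iff_mem_spectrum] at hμ
  obtain ⟨v, hv, hv0⟩ := hμ.exists_hasEigenvector
  exact ⟨v, hv0, by simpa using Module.End.mem_eigenspace_iff.1 hv⟩

/-- The Collatz–Wielandt bound. -/
lemma specRad_le_of_mulVec_le {N : ℕ} {A : Matrix (Fin N) (Fin N) ℝ} (hA : ∀ i j, 0 ≤ A i j)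
    {p : Fin N → ℝ} (hp : ∀ i, 0 < p i) {r : ℝ} (hr : 0 ≤ r) (hAp : ∀ i, (A *ᵥ p) i ≤ r * p i) :
    specRad A ≤ r := by
  refine Real.sSup_le ?_ hr
  rintro _ ⟨μ, hμ, rfl⟩
  obtain ⟨v, hv0, hv⟩ := exists_mulVec_eq_smul_of_mem_spectrum hμ
  obtain ⟨k, hk⟩ := Function.ne_iff.1 hv0
  obtain ⟨i, -, hmax⟩ := Finset.exists_max_image Finset.univ (fun j => ‖v j‖ / p j)
    ⟨k, Finset.mem_univ k⟩
  set m := ‖v i‖ / p i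
  have hvj : ∀ j, ‖v j‖ ≤ m * p j := fun j =>
    (div_le_iff₀ (hp j)).1 (hmax j (Finset.mem_univ j))
  have hm : 0 < m := (div_pos (norm_pos_iff.2 hk) (hp k)).trans_le (hmax k (Finset.mem_univ k))
  have hvi : 0 < ‖v i‖ := (div_pos_iff_of_pos_right (hp i)).1 hm
  have hμ_le : ‖μ‖ * ‖v i‖ ≤ r * ‖v i‖ :=
    calc ‖μ‖ * ‖v i‖ = ‖(A.map Complex.ofReal *ᵥ v) i‖ := by simp [hv]
      _ ≤ ∑ j, A i j * ‖v j‖ := by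
        simp only [mulVec, dotProduct]
        refine (norm_sum_le _ _).trans (Finset.sum_le_sum fun j _ => ?_)
        simp [abs_of_nonneg (hA i j)]
      _ ≤ ∑ j, A i j * (m * p j) :=
        Finset.sum_le_sum fun j _ => mul_le_mul_of_nonneg_left (hvj j) (hA i j)
      _ = m * (A *ᵥ p) i := by
        simp only [mulVec, dotProduct, Finset.mul_sum]
        exact Finset.sum_congr rfl fun j _ => by ring
      _ ≤ m * (r * p i) := mul_le_mul_of_nonneg_left (hAp i) hm.le
      _ = r * ‖v i‖ := by simp only [m]; field_simp [(hp i).ne']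
  exact le_of_mul_le_mul_right hμ_le hvi

lemma Matrix.mulVec_nonneg_of_nonneg {n : Type*} [Fintype n] {B : Matrix n n ℝ}
    (hB : ∀ i j, 0 ≤ B i j) {v : n → ℝ} (hv : 0 ≤ v) : 0 ≤ B *ᵥ v :=
  fun i => dotProduct_nonneg_of_nonneg (fun j => hB i j) hv

lemma inv_mul_mulVec_nonneg {n : Type*} [Fintype n] {B : Matrix n n ℝ}
    (hB : ∀ i j, 0 ≤ B i j) {α v : n → ℝ} (hα : ∀ i, 0 < α i) (hv : 0 ≤ v) :
    0 ≤ α⁻¹ * B *ᵥ v :=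
  fun i => mul_nonneg (inv_nonneg.2 (hα i).le) (mulVec_nonneg_of_nonneg hB hv i)

section Threshold

variable {N : ℕ} {B : Matrix (Fin N) (Fin N) ℝ} {α δ s p : Fin N → ℝ}

lemma rhoS_le_one_of_mulVec_le (hB : ∀ i j, 0 ≤ B i j) (hs : ∀ i, 0 < α i * s i + δ i)
    (hp : ∀ i, 0 < p i) (hBp : ∀ i, (B *ᵥ p) i ≤ (α i * s i + δ i) * p i) :
    rhoS B α δ s ≤ 1 := by
  refine specRad_le_of_mulVec_le (fun i j => ?_) hp zero_le_one fun i => ?_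
  · simpa [diagonal_mul] using mul_nonneg (inv_nonneg.2 (hs i).le) (hB i j)
  · rw [← mulVec_mulVec, mulVec_diagonal, one_mul, inv_mul_le_iff₀ (hs i)]
    exact hBp i

lemma rhoS_add_mulVec_le_one (hB : ∀ i j, 0 ≤ B i j) (hα : ∀ i, 0 < α i) (hδ : ∀ i, 0 < δ i)
    (hs : 0 ≤ s) (hp : ∀ i, 0 < p i)
    (hfix : ∀ i, (1 - p i) * (B *ᵥ p) i = (α i * s i + δ i) * p i) :
    rhoS B α δ (s + α⁻¹ * B *ᵥ p) ≤ 1 := by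
  refine rhoS_le_one_of_mulVec_le hB (fun i => ?_) hp fun i => le_of_eq ?_
  · have : 0 ≤ α i * (s + α⁻¹ * B *ᵥ p) i :=
      mul_nonneg (hα i).le (add_nonneg (hs i) (inv_mul_mulVec_nonneg hB hα (fun j => (hp j).le) i))
    linarith [hδ i]
  · have := hfix i
    simp only [Pi.add_apply, Pi.mul_apply, Pi.inv_apply]
    field_simp [(hα i).ne']
    linear_combination this

lemma rhoS_inv_mul_mulVec_one_le_one (hB : ∀ i j, 0 ≤ B i j) (hα : ∀ i, 0 < α i)
    (hδ : ∀ i, 0 < δ i) : rhoS B α δ (α⁻¹ * B *ᵥ 1) ≤ 1 := by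
  have hcancel : ∀ i, α i * (α⁻¹ * B *ᵥ 1) i = (B *ᵥ 1) i := fun i => by
    simp only [Pi.mul_apply, Pi.inv_apply]
    field_simp [(hα i).ne']
  have hB1 : ∀ i, 0 ≤ (B *ᵥ 1) i := mulVec_nonneg_of_nonneg hB zero_le_one
  refine rhoS_le_one_of_mulVec_le (p := 1) hB (fun i => ?_) (fun _ => one_pos) fun i => ?_
  · linarith [hcancel i, hB1 i, hδ i]
  · simp only [Pi.one_apply, mul_one]
    linarith [hcancel i, hδ i]

variable {w : (Fin N → ℝ) → ℝ} {c : Fin N → ℝ} {pse : (Fin N → ℝ) → Fin N → ℝ}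

lemma bddBelow_rhoS_le_one (hw : Monotone w) :
    BddBelow {v | ∃ s : Fin N → ℝ, 0 ≤ s ∧ rhoS B α δ s ≤ 1 ∧ v = w s} :=
  ⟨w 0, by rintro _ ⟨s, hs, -, rfl⟩; exact hw hs⟩

lemma sInf_rhoS_le_one_le_add (hB : ∀ i j, 0 ≤ B i j) (hα : ∀ i, 0 < α i) (hδ : ∀ i, 0 < δ i)
    (hc : ∀ i, 0 < c i) (hwc : ConvexOn ℝ univ w) (hwd : Differentiable ℝ w) (hw : Monotone w)
    (hpse_zero : ∀ s : Fin N → ℝ, 0 ≤ s → rhoS B α δ s ≤ 1 → pse s = 0)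
    (hpse_pos : ∀ s : Fin N → ℝ, 0 ≤ s → 1 < rhoS B α δ s →
      (∀ i, 0 < pse s i) ∧
      (∀ i, (1 - pse s i) * B.mulVec (pse s) i = (α i * s i + δ i) * pse s i))
    (hcond : ∀ s : Fin N → ℝ, 0 ≤ s →
      w s ≤ sInf {v | ∃ s : Fin N → ℝ, 0 ≤ s ∧ rhoS B α δ s ≤ 1 ∧ v = w s} →
      ∀ i, ∑ j, B j i * (α j)⁻¹ * fderiv ℝ w s (Pi.single j 1) ≤ c i)
    {s : Fin N → ℝ} (hs : 0 ≤ s) :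
    sInf {v | ∃ s : Fin N → ℝ, 0 ≤ s ∧ rhoS B α δ s ≤ 1 ∧ v = w s} ≤
      w s + ∑ i, c i * pse s i := by
  by_cases hρ : rhoS B α δ s ≤ 1
  · simpa [hpse_zero s hs hρ] using csInf_le (bddBelow_rhoS_le_one hw) ⟨s, hs, hρ, rfl⟩
  obtain ⟨hp, hfix⟩ := hpse_pos s hs (not_le.1 hρ)
  have hΔ : 0 ≤ α⁻¹ * B *ᵥ pse s := inv_mul_mulVec_nonneg hB hα fun i => (hp i).le
  refine hwc.le_add_of_fderiv_le_at_level (Δ := α⁻¹ * B *ᵥ pse s) hwd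
    (Finset.sum_nonneg fun i _ => mul_nonneg (hc i).le (hp i).le) ?_ fun t ht hwt => ?_
  · exact csInf_le (bddBelow_rhoS_le_one hw)
      ⟨_, add_nonneg hs hΔ, rhoS_add_mulVec_le_one hB hα hδ hs hp hfix, rfl⟩
  · have hgrad := hcond _ (add_nonneg hs (smul_nonneg ht.1 hΔ)) hwt.le
    rw [ContinuousLinearMap.apply_mul_mulVec]
    exact Finset.sum_le_sum fun i _ => by
      rw [mul_comm (c i)]
      exact mul_le_mul_of_nonneg_left (hgrad i) (hp i).le

end Threshold

namespace FeasPR3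

variable {N : ℕ} {w : (Fin N → ℝ) → ℝ} {B : Matrix (Fin N) (Fin N) ℝ} {α δ : Fin N → ℝ}
  {C : ℝ} {s p y : Fin N → ℝ} {U : Matrix (Fin N) (Fin N) ℝ}

lemma p_pos (h : FeasPR3 w B α δ C s p y U) (i : Fin N) : 0 < p i :=
  (Real.exp_pos _).trans_le (h.2.2.2.2.1 i)

lemma bddBelow_objective (hw : Monotone w) {c : Fin N → ℝ} (hc : ∀ i, 0 < c i) :
    BddBelow {v | ∃ (s p y : Fin N → ℝ) (U : Matrix (Fin N) (Fin N) ℝ),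
      FeasPR3 w B α δ C s p y U ∧ v = w s + ∑ i, c i * p i} := by
  refine ⟨w 0, ?_⟩
  rintro _ ⟨s, p, y, U, h, rfl⟩
  have : 0 ≤ ∑ i, c i * p i := Finset.sum_nonneg fun i _ => mul_nonneg (hc i).le (h.p_pos i).le
  linarith [hw (show (0 : Fin N → ℝ) ≤ s from h.1)]

/-- The row sums are unchanged because `B (p - q) + α ∘ (s + α⁻¹ ∘ B q) = B p + α ∘ s`; shifting
`y` by `-log r` scales `e^{-y}` by `r` and leaves `e^{y_i} B_ij e^{-y_j}` unchanged. -/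
lemma transfer (h : FeasPR3 w B α δ C s p y U) (hα : ∀ i, α i ≠ 0) {q : Fin N → ℝ}
    (hq : 0 ≤ α⁻¹ * B *ᵥ q) (hw : w (s + α⁻¹ * B *ᵥ q) ≤ C) {r : ℝ} (hr0 : 0 < r)
    (hr1 : r ≤ 1) (hrq : r • p ≤ p - q) :
    FeasPR3 w B α δ C (s + α⁻¹ * B *ᵥ q) (p - q) (fun i => y i - Real.log r) U := by
  obtain ⟨hs, hy, -, hrow, hpy, hU⟩ := h
  have hlog : Real.log r ≤ 0 := Real.log_nonpos hr0.le hr1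
  refine ⟨fun i => add_nonneg (hs i) (hq i), fun i => by linarith [hy i], hw, fun i => ?_,
    fun i => ?_, fun i j => ?_⟩
  · rw [hrow i, mulVec_sub]
    simp only [Pi.add_apply, Pi.sub_apply, Pi.mul_apply, Pi.inv_apply]
    field_simp [hα i]
    ring
  · calc Real.exp (-(y i - Real.log r)) = r * Real.exp (-y i) := by
          rw [neg_sub, Real.exp_sub, Real.exp_log hr0, Real.exp_neg]; ring
      _ ≤ r * p i := mul_le_mul_of_nonneg_left (hpy i) hr0.le
      _ ≤ (p - q) i := hrq i
  · calc Real.exp (y i - Real.log r) * B i j * Real.exp (-(y j - Real.log r))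
        = Real.exp (y i) * B i j * Real.exp (-y j) := by
          simp only [Real.exp_sub, Real.exp_neg, Real.exp_log hr0]
          field_simp
      _ ≤ U i j := hU i j

lemma exists_lt_of_lt_budget (h : FeasPR3 w B α δ C s p y U) (hB : ∀ i j, 0 ≤ B i j)
    (hα : ∀ i, 0 < α i) (hwd : Differentiable ℝ w) (hC : w s < C) {c : Fin N → ℝ} {i : Fin N}
    (hi : ∑ j, B j i * (α j)⁻¹ * fderiv ℝ w s (Pi.single j 1) < c i) :
    ∃ s' p' y', FeasPR3 w B α δ C s' p' y' U ∧
      w s' + ∑ k, c k * p' k < w s + ∑ k, c k * p k := by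
  set Δ := α⁻¹ * B *ᵥ Pi.single i 1 with hΔ
  have hwΔ : fderiv ℝ w s Δ < c i := by
    rw [hΔ, ContinuousLinearMap.apply_mul_mulVec]
    simpa [Pi.single_apply] using hi
  have hpi := h.p_pos i
  obtain ⟨t, ⟨ht0, htp⟩, htC, htw⟩ := (hwd s).exists_lt_add_mul_of_fderiv_lt hwΔ hC hpi
  have hmove : α⁻¹ * B *ᵥ (t • Pi.single i 1) = t • Δ := by
    rw [mulVec_smul, mul_smul_comm]
  have hr0 : 0 < (p i - t) / p i := div_pos (by linarith) hpi
  have hr1 : (p i - t) / p i ≤ 1 := (div_le_one hpi).2 (by linarith)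
  have hrq : ((p i - t) / p i) • p ≤ p - t • Pi.single i 1 := by
    intro k
    by_cases hk : k = i
    · subst hk; simp [div_mul_cancel₀ _ hpi.ne']
    · simpa [hk] using mul_le_of_le_one_left (h.p_pos k).le hr1
  refine ⟨_, _, _, h.transfer (fun k => (hα k).ne') ?_ ?_ hr0 hr1 hrq, ?_⟩
  · rw [hmove]
    exact smul_nonneg ht0.le (inv_mul_mulVec_nonneg hB hα (Pi.single_nonneg.2 zero_le_one))
  · rw [hmove]; exact htC.le
  · simp only [hmove, Pi.sub_apply, Pi.smul_apply, smul_eq_mul, mul_sub, Finset.sum_sub_distrib]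
    simp [Pi.single_apply]
    linarith

end FeasPR3

theorem statement17_general {N : ℕ}
    (B : Matrix (Fin N) (Fin N) ℝ) (hBnn : ∀ i j, 0 ≤ B i j)
    (δ α : Fin N → ℝ) (hδ : ∀ i, 0 < δ i) (hα : ∀ i, 0 < α i)
    (w : (Fin N → ℝ) → ℝ)
    (hwconv : ConvexOn ℝ Set.univ w)
    (hwmono : ∀ s s' : Fin N → ℝ, s ≤ s' → s ≠ s' → w s < w s')
    (hwdiff : Differentiable ℝ w)
    (c : Fin N → ℝ) (hc : ∀ i, 0 < c i)
    (pse : (Fin N → ℝ) → (Fin N → ℝ))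
    (hpse_zero : ∀ s : Fin N → ℝ, 0 ≤ s → rhoS B α δ s ≤ 1 → pse s = 0)
    (hpse_pos : ∀ s : Fin N → ℝ, 0 ≤ s → 1 < rhoS B α δ s →
      (∀ i, 0 < pse s i) ∧
      (∀ i, (1 - pse s i) * B.mulVec (pse s) i = (α i * s i + δ i) * pse s i))
    (f0star : ℝ)
    (hf0star : f0star = sInf {v | ∃ s : Fin N → ℝ, 0 ≤ s ∧ v = w s + ∑ i, c i * pse s i})
    (Cstar : ℝ)
    (hCstar : Cstar = sInf {v | ∃ s : Fin N → ℝ, 0 ≤ s ∧ rhoS B α δ s ≤ 1 ∧ v = w s})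
    (fL : ℝ → ℝ)
    (hfL : ∀ C : ℝ, fL C = sInf {v | ∃ (s p y : Fin N → ℝ) (U : Matrix (Fin N) (Fin N) ℝ),
      FeasPR3 w B α δ C s p y U ∧ v = w s + ∑ i, c i * p i})
    (C : ℝ)
    (hcond : ∀ s : Fin N → ℝ, 0 ≤ s → w s ≤ C →
      (∀ i, ∑ j, B j i * (α j)⁻¹ * fderiv ℝ w s (Pi.single j 1) ≤ c i) ∧
      (∃ i, ∑ j, B j i * (α j)⁻¹ * fderiv ℝ w s (Pi.single j 1) < c i)) :
    (∀ (sL pL yL : Fin N → ℝ) (UL : Matrix (Fin N) (Fin N) ℝ),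
      FeasPR3 w B α δ C sL pL yL UL →
      w sL + ∑ i, c i * pL i = fL C →
      w sL = C) ∧
    ((∀ s : Fin N → ℝ, 0 ≤ s → w s ≤ Cstar →
        (∀ i, ∑ j, B j i * (α j)⁻¹ * fderiv ℝ w s (Pi.single j 1) ≤ c i) ∧
        (∃ i, ∑ j, B j i * (α j)⁻¹ * fderiv ℝ w s (Pi.single j 1) < c i)) →
      f0star = Cstar) := by
  have hw_mono : Monotone w := StrictMono.monotone fun a b hab => hwmono a b hab.le hab.ne
  refine ⟨fun sL pL yL UL hfeas hopt => ?_, fun hcond' => ?_⟩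
  · by_contra hne
    obtain ⟨i, hi⟩ := (hcond sL hfeas.1 hfeas.2.2.1).2
    obtain ⟨s', p', y', hfeas', hlt⟩ :=
      hfeas.exists_lt_of_lt_budget hBnn hα hwdiff (hfeas.2.2.1.lt_of_ne hne) hi
    have hle := csInf_le (FeasPR3.bddBelow_objective hw_mono hc) ⟨s', p', y', UL, hfeas', rfl⟩
    rw [← hfL] at hle
    linarith
  · subst hf0star hCstar
    set T := {v | ∃ s : Fin N → ℝ, 0 ≤ s ∧ rhoS B α δ s ≤ 1 ∧ v = w s}
    have hCstar_le : ∀ s : Fin N → ℝ, 0 ≤ s → sInf T ≤ w s + ∑ i, c i * pse s i := fun s hs =>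
      sInf_rhoS_le_one_le_add hBnn hα hδ hc hwconv hwdiff hw_mono hpse_zero hpse_pos
        (fun x hx hwx => (hcond' x hx hwx).1) hs
    have hTne : T.Nonempty := ⟨_, _, inv_mul_mulVec_nonneg hBnn hα zero_le_one,
      rhoS_inv_mul_mulVec_one_le_one hBnn hα hδ, rfl⟩
    refine le_antisymm (csInf_le_csInf ⟨sInf T, ?_⟩ hTne ?_)
      (le_csInf ⟨w 0 + ∑ i, c i * pse 0 i, 0, le_rfl, rfl⟩ ?_)
    · rintro _ ⟨s, hs, rfl⟩
      exact hCstar_le s hs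
    · rintro _ ⟨s, hs, hρ, rfl⟩
      exact ⟨s, hs, by simp [hpse_zero s hs hρ]⟩
    · rintro _ ⟨s, hs, rfl⟩
      exact hCstar_le s hs

theorem statement17 {N : ℕ} (hN : 2 ≤ N)
    (B : Matrix (Fin N) (Fin N) ℝ) (hBnn : ∀ i j, 0 ≤ B i j) (hBirr : MatIrred B)
    (δ α : Fin N → ℝ) (hδ : ∀ i, 0 < δ i) (hα : ∀ i, 0 < α i)
    (w : (Fin N → ℝ) → ℝ) (hwcont : Continuous w)
    (hwconv : ConvexOn ℝ Set.univ w)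
    (hwmono : ∀ s s' : Fin N → ℝ, s ≤ s' → s ≠ s' → w s < w s')
    (hwdiff : Differentiable ℝ w)
    (c : Fin N → ℝ) (hc : ∀ i, 0 < c i)
    (pse : (Fin N → ℝ) → (Fin N → ℝ))
    (hpse_range : ∀ s : Fin N → ℝ, 0 ≤ s → ∀ i, 0 ≤ pse s i ∧ pse s i ≤ 1)
    (hpse_zero : ∀ s : Fin N → ℝ, 0 ≤ s → rhoS B α δ s ≤ 1 → pse s = 0)
    (hpse_pos : ∀ s : Fin N → ℝ, 0 ≤ s → 1 < rhoS B α δ s →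
      (∀ i, 0 < pse s i) ∧
      (∀ i, (1 - pse s i) * B.mulVec (pse s) i = (α i * s i + δ i) * pse s i))
    (f0star : ℝ)
    (hf0star : f0star = sInf {v | ∃ s : Fin N → ℝ, 0 ≤ s ∧ v = w s + ∑ i, c i * pse s i})
    (Cstar : ℝ)
    (hCstar : Cstar = sInf {v | ∃ s : Fin N → ℝ, 0 ≤ s ∧ rhoS B α δ s ≤ 1 ∧ v = w s})
    (fL : ℝ → ℝ)
    (hfL : ∀ C : ℝ, fL C = sInf {v | ∃ (s p y : Fin N → ℝ) (U : Matrix (Fin N) (Fin N) ℝ),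
      FeasPR3 w B α δ C s p y U ∧ v = w s + ∑ i, c i * p i})
    (C : ℝ) (hC0 : 0 < C) (hCC : C < Cstar)
    (hcond : ∀ s : Fin N → ℝ, 0 ≤ s → w s ≤ C →
      (∀ i, ∑ j, B j i * (α j)⁻¹ * fderiv ℝ w s (Pi.single j 1) ≤ c i) ∧
      (∃ i, ∑ j, B j i * (α j)⁻¹ * fderiv ℝ w s (Pi.single j 1) < c i)) :
    (∀ (sL pL yL : Fin N → ℝ) (UL : Matrix (Fin N) (Fin N) ℝ),
      FeasPR3 w B α δ C sL pL yL UL →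
      w sL + ∑ i, c i * pL i = fL C →
      w sL = C) ∧
    ((∀ s : Fin N → ℝ, 0 ≤ s → w s ≤ Cstar →
        (∀ i, ∑ j, B j i * (α j)⁻¹ * fderiv ℝ w s (Pi.single j 1) ≤ c i) ∧
        (∃ i, ∑ j, B j i * (α j)⁻¹ * fderiv ℝ w s (Pi.single j 1) < c i)) →
      f0star = Cstar) :=
  statement17_general B hBnn δ α hδ hα w hwconv hwmono hwdiff c hc pse hpse_zero hpse_pos f0star
    hf0star Cstar hCstar fL hfL C hcond
end
end

section
/- Let B ∈ ℝ^{N×N} be entrywise nonnegative and irreducible and let h ∈ ℝ^N be entrywise positive. Then inf { hᵀz : z ∈ ℝ^N, z ≥ 0, and the minimum of the real parts of the complex eigenvalues of diag(z) − B equals 0 } = inf { Σ_{i,j} h_i B_{ij} x_j / x_i : x ∈ ℝ^N, x entrywise positive }; that is, the diagonal-perturbation problem in (21) is the problem of balancing the matrix diag(h)·B. -/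
/-!
The two sets of values coincide. For `x > 0`, the vector `z = (B x) / x` makes `x` a positive
eigenvector of `diag z - B` with eigenvalue `0`. Conversely, Perron–Frobenius for the irreducible
nonnegative matrix `s - (diag z - B)` (with `s ≥ max z`) gives `diag z - B` a positive eigenvector,
with some real eigenvalue `t`. For a matrix whose off-diagonal entries are nonpositive, the
eigenvalue of a positive eigenvector is the least real part of its spectrum, so the constraint
forces `t = 0`, i.e. `B x = z x`, and then `hᵀz = ∑ h_i B_ij x_j / x_i`.
-/

noncomputable section

open Matrix

open Finset

namespace Matrix

variable {n : Type*} [Fintype n]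

theorem ofReal_mulVec (M : Matrix n n ℝ) (x : n → ℝ) :
    M.map Complex.ofReal *ᵥ (fun i => (x i : ℂ)) = fun i => ((M *ᵥ x) i : ℂ) := by
  funext i
  exact (RingHom.map_mulVec Complex.ofRealHom M x i).symm

theorem sum_mul_mulVec_div (h x : n → ℝ) (B : Matrix n n ℝ) :
    ∑ i, h i * ((B *ᵥ x) i / x i) = ∑ i, ∑ j, h i * B i j * x j / x i := by
  simp only [mulVec, dotProduct, sum_div, mul_sum, mul_div_assoc, mul_assoc]

theorem mulVec_pos_of_pos {M : Matrix n n ℝ} (hM : ∀ i j, 0 < M i j) {w : n → ℝ} (hw : 0 ≤ w)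
    (hw₀ : w ≠ 0) (i : n) : 0 < (M *ᵥ w) i := by
  obtain ⟨j, hj⟩ := Function.ne_iff.1 hw₀
  exact sum_pos' (fun k _ => mul_nonneg (hM i k).le (hw k))
    ⟨j, mem_univ j, mul_pos (hM i j) ((hw j).lt_of_ne' hj)⟩

section

variable [Nonempty n]

/-- Meaningful for positive `y`: then it is the largest `r` with `r • y ≤ M *ᵥ y`. -/
def collatzWielandt (M : Matrix n n ℝ) (y : n → ℝ) : ℝ :=
  univ.inf' univ_nonempty fun i => (M *ᵥ y) i / y i

theorem collatzWielandt_mul_le (M : Matrix n n ℝ) {y : n → ℝ} (hy : ∀ i, 0 < y i) (i : n) :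
    collatzWielandt M y * y i ≤ (M *ᵥ y) i :=
  (le_div_iff₀ (hy i)).1 (inf'_le _ (mem_univ i))

theorem collatzWielandt_smul (M : Matrix n n ℝ) (y : n → ℝ) {c : ℝ} (hc : c ≠ 0) :
    collatzWielandt M (c • y) = collatzWielandt M y := by
  simp only [collatzWielandt, mulVec_smul, Pi.smul_apply, smul_eq_mul, mul_div_mul_left _ _ hc]

theorem lt_collatzWielandt_mulVec {M : Matrix n n ℝ} (hM : ∀ i j, 0 < M i j) {y : n → ℝ}
    (hy : ∀ i, 0 < y i) {r : ℝ} (hr : ∀ i, r * y i ≤ (M *ᵥ y) i) (hne : M *ᵥ y ≠ r • y) :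
    r < collatzWielandt M (M *ᵥ y) := by
  have hMw : ∀ i, 0 < (M *ᵥ (M *ᵥ y - r • y)) i :=
    mulVec_pos_of_pos hM (fun i => by simpa using hr i) (sub_ne_zero.2 hne)
  have hMy : ∀ i, 0 < (M *ᵥ y) i := mulVec_pos_of_pos hM (fun i => (hy i).le)
    (Function.ne_iff.2 ⟨Classical.arbitrary n, (hy _).ne'⟩)
  refine (lt_inf'_iff _).2 fun i _ => (lt_div_iff₀ (hMy i)).2 ?_
  have := hMw i
  rw [mulVec_sub, mulVec_smul] at this
  simpa using this

theorem exists_pos_eigenvector_of_pos {M : Matrix n n ℝ} (hM : ∀ i j, 0 < M i j) :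
    ∃ r : ℝ, ∃ x : n → ℝ, (∀ i, 0 < x i) ∧ M *ᵥ x = r • x := by
  -- If `w` maximises `collatzWielandt M (M *ᵥ w)` on the simplex, `M *ᵥ w` is an eigenvector:
  -- otherwise `M *ᵥ (M *ᵥ w)`, renormalised into the simplex, would do strictly better.
  have hpos : ∀ w ∈ stdSimplex ℝ n, ∀ i, 0 < (M *ᵥ w) i := fun w hw =>
    mulVec_pos_of_pos hM hw.1 fun h => by simpa [h] using hw.2
  have hcont : ContinuousOn (fun w => collatzWielandt M (M *ᵥ w)) (stdSimplex ℝ n) := by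
    have hMv : Continuous (M *ᵥ ·) := continuous_const.matrix_mulVec continuous_id
    refine ContinuousOn.finset_inf'_apply _ fun i _ => ?_
    exact ((continuous_apply i).comp (hMv.comp hMv)).continuousOn.div
      ((continuous_apply i).comp hMv).continuousOn fun w hw => (hpos w hw i).ne'
  obtain ⟨w, hw, hmax⟩ := (isCompact_stdSimplex ℝ n).exists_isMaxOn
    ⟨_, by classical exact single_mem_stdSimplex ℝ (Classical.arbitrary n)⟩ hcont
  set y := M *ᵥ w
  have hy : ∀ i, 0 < y i := hpos w hw
  refine ⟨collatzWielandt M y, y, hy, ?_⟩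
  by_contra hne
  have hlt := lt_collatzWielandt_mulVec hM hy (collatzWielandt_mul_le M hy) hne
  have hsum : 0 < ∑ i, y i := sum_pos (fun i _ => hy i) univ_nonempty
  have hc : (∑ i, y i)⁻¹ • y ∈ stdSimplex ℝ n :=
    ⟨fun i => (mul_pos (inv_pos.2 hsum) (hy i)).le,
      by simp only [Pi.smul_apply, smul_eq_mul, ← mul_sum, inv_mul_cancel₀ hsum.ne']⟩
  have := hmax hc
  simp only [Set.mem_ofPred_eq, mulVec_smul,
    collatzWielandt_smul _ _ (inv_ne_zero hsum.ne')] at this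
  exact this.not_gt hlt

theorem exists_smul_eq_of_mulVec_eq_smul {D : Matrix n n ℝ} (hD : ∀ i j, 0 < D i j) {x : n → ℝ}
    (hx : ∀ i, 0 < x i) {r : ℝ} (hDx : D *ᵥ x = r • x) {v : n → ℝ} (hDv : D *ᵥ v = r • v) :
    ∃ c : ℝ, v = c • x := by
  -- With `c = min (v / x)`, `v - c • x ≥ 0` vanishes at the minimiser `i₀`, whereas `D` would make
  -- it positive there if it were nonzero.
  obtain ⟨i₀, -, hi₀⟩ := exists_min_image univ (fun i => v i / x i) univ_nonempty
  set c := v i₀ / x i₀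
  refine ⟨c, eq_of_sub_eq_zero (by_contra fun hw => ?_)⟩
  have hw₀ : 0 ≤ v - c • x := fun i => by
    simpa [le_div_iff₀ (hx i)] using hi₀ i (mem_univ i)
  have := mulVec_pos_of_pos hD hw₀ hw i₀
  simp only [mulVec_sub, mulVec_smul, hDx, hDv, Pi.sub_apply, Pi.smul_apply, smul_eq_mul, c,
    div_mul_cancel₀ _ (hx i₀).ne', mul_left_comm _ r, sub_self] at this
  exact this.false

end

variable [DecidableEq n]

theorem pow_apply_le_pow_apply {B C : Matrix n n ℝ} (hB : ∀ i j, 0 ≤ B i j)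
    (hBC : ∀ i j, B i j ≤ C i j) (k : ℕ) (i j : n) : (B ^ k) i j ≤ (C ^ k) i j := by
  induction k generalizing j with
  | zero => rfl
  | succ k ih =>
    simp only [pow_succ, mul_apply]
    exact sum_le_sum fun l _ => mul_le_mul (ih l) (hBC l j) (hB l j)
      ((pow_apply_nonneg hB k i l).trans (ih l))

theorem IsIrreducible.diagonal_add {d : n → ℝ} (hd : 0 ≤ d) {B : Matrix n n ℝ}
    (hB : B.IsIrreducible) : (diagonal d + B).IsIrreducible := by
  have hdiag : ∀ i j, 0 ≤ diagonal d i j := fun i j => by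
    by_cases h : i = j
    · subst h; simpa using hd i
    · simp [h]
  have hBC : ∀ i j, B i j ≤ (diagonal d + B) i j := fun i j =>
    le_add_of_nonneg_left (hdiag i j)
  refine (isIrreducible_iff_exists_pow_pos fun i j => (hB.nonneg i j).trans (hBC i j)).2
    fun i j => ?_
  obtain ⟨k, hk, hpos⟩ := (isIrreducible_iff_exists_pow_pos hB.nonneg).1 hB i j
  exact ⟨k, hk, hpos.trans_le (pow_apply_le_pow_apply hB.nonneg hBC k i j)⟩

theorem IsIrreducible.exists_pos_eigenvector [Nonempty n] {C : Matrix n n ℝ}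
    (hC : C.IsIrreducible) : ∃ θ : ℝ, ∃ x : n → ℝ, (∀ i, 0 < x i) ∧ C *ᵥ x = θ • x := by
  -- The positive matrix `∑ C ^ k i j` commutes with `C`, so `C` preserves its Perron eigenline.
  choose k _ hk using (isIrreducible_iff_exists_pow_pos hC.nonneg).1 hC
  have hD : ∀ i j, 0 < (∑ p : n × n, C ^ k p.1 p.2) i j := fun i j => by
    rw [Matrix.sum_apply]
    exact sum_pos' (fun p _ => pow_apply_nonneg hC.nonneg _ i j) ⟨(i, j), mem_univ _, hk i j⟩
  have hCD : Commute C (∑ p : n × n, C ^ k p.1 p.2) :=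
    Commute.sum_right _ _ _ fun p _ => Commute.self_pow C _
  obtain ⟨r, x, hx, hDx⟩ := exists_pos_eigenvector_of_pos hD
  obtain ⟨θ, hθ⟩ := exists_smul_eq_of_mulVec_eq_smul hD hx hDx (v := C *ᵥ x) (by
    rw [mulVec_mulVec, ← hCD.eq, ← mulVec_mulVec, hDx, mulVec_smul])
  exact ⟨θ, x, hx, hθ⟩

theorem IsIrreducible.exists_pos_eigenvector_diagonal_sub [Nonempty n] {B : Matrix n n ℝ}
    (hB : B.IsIrreducible) (z : n → ℝ) :
    ∃ t : ℝ, ∃ x : n → ℝ, (∀ i, 0 < x i) ∧ (diagonal z - B) *ᵥ x = t • x := by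
  obtain ⟨s, hs⟩ := (Set.finite_range z).bddAbove
  obtain ⟨θ, x, hx, hCx⟩ := (hB.diagonal_add (d := fun i => s - z i)
    fun i => sub_nonneg.2 (hs ⟨i, rfl⟩)).exists_pos_eigenvector
  refine ⟨s - θ, x, hx, ?_⟩
  have : diagonal z - B = s • 1 - (diagonal (fun i => s - z i) + B) := by
    ext i j
    by_cases h : i = j
    · subst h; simp; ring
    · simp [h]
  rw [this, sub_mulVec, smul_mulVec, one_mulVec, hCx, sub_smul]

theorem mem_spectrum_iff_exists_mulVec_eq_smul {K : Type*} [Field K] {A : Matrix n n K} {μ : K} :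
    μ ∈ spectrum K A ↔ ∃ v ≠ 0, A *ᵥ v = μ • v := by
  rw [← spectrum_toLin', ← Module.End.hasEigenvalue_iff_mem_spectrum]
  constructor
  · intro hμ
    obtain ⟨v, hv⟩ := hμ.exists_hasEigenvector
    exact ⟨v, hv.2, by simpa using hv.apply_eq_smul⟩
  · rintro ⟨v, hv, hAv⟩
    exact Module.End.hasEigenvalue_of_hasEigenvector
      ⟨Module.End.mem_eigenspace_iff.2 (by simpa using hAv), hv⟩

theorem norm_le_of_mem_spectrum_of_pos_eigenvector {M : Matrix n n ℝ} (hM : ∀ i j, 0 ≤ M i j)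
    {x : n → ℝ} (hx : ∀ i, 0 < x i) {θ : ℝ} (hMx : M *ᵥ x = θ • x) {μ : ℂ}
    (hμ : μ ∈ spectrum ℂ (M.map Complex.ofReal)) : ‖μ‖ ≤ θ := by
  obtain ⟨u, hu, hMu⟩ := mem_spectrum_iff_exists_mulVec_eq_smul.1 hμ
  obtain ⟨j₀, hj₀⟩ := Function.ne_iff.1 hu
  obtain ⟨i, -, hi⟩ := exists_max_image univ (fun j => ‖u j‖ / x j) ⟨j₀, mem_univ j₀⟩
  set m := ‖u i‖ / x i
  have hum : ∀ j, ‖u j‖ ≤ m * x j := fun j => (div_le_iff₀ (hx j)).1 (hi j (mem_univ j))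
  have hui : 0 < ‖u i‖ := (div_pos_iff_of_pos_right (hx i)).1 <|
    (div_pos (norm_pos_iff.2 hj₀) (hx j₀)).trans_le (hi j₀ (mem_univ j₀))
  refine le_of_mul_le_mul_right ?_ hui
  calc ‖μ‖ * ‖u i‖ = ‖∑ j, (M i j : ℂ) * u j‖ := by
        rw [← norm_mul, ← smul_eq_mul, ← Pi.smul_apply, ← hMu]; rfl
    _ ≤ ∑ j, M i j * ‖u j‖ := by
        refine (norm_sum_le _ _).trans_eq (sum_congr rfl fun j _ => ?_)
        rw [norm_mul, Complex.norm_of_nonneg (hM i j)]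
    _ ≤ ∑ j, M i j * (m * x j) := sum_le_sum fun j _ => mul_le_mul_of_nonneg_left (hum j) (hM i j)
    _ = m * (M *ᵥ x) i := by
        simp only [mulVec, dotProduct, mul_sum]; exact sum_congr rfl fun j _ => by ring
    _ = θ * ‖u i‖ := by
        rw [hMx, Pi.smul_apply, smul_eq_mul, ← div_mul_cancel₀ ‖u i‖ (hx i).ne']; ring

theorem isLeast_re_spectrum_of_pos_eigenvector [Nonempty n] {A : Matrix n n ℝ}
    (hA : ∀ i j, i ≠ j → A i j ≤ 0) {x : n → ℝ} (hx : ∀ i, 0 < x i) {t : ℝ}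
    (hAx : A *ᵥ x = t • x) : IsLeast (Complex.re '' spectrum ℂ (A.map Complex.ofReal)) t := by
  -- `C = s - A` is nonnegative with `C x = (s - t) x`, so `‖s - μ‖ ≤ s - t` for every eigenvalue
  -- `μ` of `A`, whence `t ≤ re μ`.
  obtain ⟨s, hs⟩ := (Set.finite_range fun i => A i i).bddAbove
  set C := s • (1 : Matrix n n ℝ) - A
  have hC : ∀ i j, 0 ≤ C i j := by
    intro i j
    rcases eq_or_ne i j with rfl | hij
    · simp [C, hs ⟨i, rfl⟩]
    · simp [C, one_apply_ne hij, hA i j hij]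
  have hCx : C *ᵥ x = (s - t) • x := by
    rw [sub_mulVec, smul_mulVec, one_mulVec, hAx, sub_smul]
  refine ⟨⟨t, mem_spectrum_iff_exists_mulVec_eq_smul.2 ⟨fun i => (x i : ℂ), ?_, ?_⟩, rfl⟩, ?_⟩
  · exact Function.ne_iff.2 ⟨Classical.arbitrary n, by simpa using (hx _).ne'⟩
  · rw [ofReal_mulVec, hAx]; funext i; simp
  rintro _ ⟨μ, hμ, rfl⟩
  have hsμ : (s : ℂ) - μ ∈ spectrum ℂ (C.map Complex.ofReal) := by
    obtain ⟨u, hu, hAu⟩ := mem_spectrum_iff_exists_mulVec_eq_smul.1 hμ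
    refine mem_spectrum_iff_exists_mulVec_eq_smul.2 ⟨u, hu, ?_⟩
    have : C.map Complex.ofReal = (s : ℂ) • 1 - A.map Complex.ofReal := by
      ext i j; simp [C, one_apply, apply_ite Complex.ofReal]
    rw [this, sub_mulVec, smul_mulVec, one_mulVec, hAu, sub_smul]
  have := (Complex.re_le_norm _).trans (norm_le_of_mem_spectrum_of_pos_eigenvector hC hx hCx hsμ)
  simp only [Complex.sub_re, Complex.ofReal_re] at this
  linarith

theorem diagonal_sub_mulVec_eq_zero_iff {z x : n → ℝ} (hx : ∀ i, x i ≠ 0) {B : Matrix n n ℝ} :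
    (diagonal z - B) *ᵥ x = 0 ↔ z = fun i => (B *ᵥ x) i / x i := by
  simp only [funext_iff, sub_mulVec, mulVec_diagonal, sub_eq_zero, eq_div_iff (hx _), eq_comm]

end Matrix

theorem statement19_general {N : ℕ} (hN : 2 ≤ N)
    (B : Matrix (Fin N) (Fin N) ℝ) (hBnn : ∀ i j, 0 ≤ B i j) (hBirr : MatIrred B)
    (h : Fin N → ℝ) :
    sInf {v | ∃ z : Fin N → ℝ, (∀ i, 0 ≤ z i) ∧
        sInf (Complex.re '' spectrum ℂ ((Matrix.diagonal z - B).map Complex.ofReal)) = 0 ∧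
        v = ∑ i, h i * z i} =
      sInf {v | ∃ x : Fin N → ℝ, (∀ i, 0 < x i) ∧
        v = ∑ i, ∑ j, h i * B i j * x j / x i} := by
  have : Nonempty (Fin N) := ⟨⟨0, by omega⟩⟩
  have hB : B.IsIrreducible := (isIrreducible_iff_exists_pow_pos hBnn).2 hBirr
  have hZ : ∀ z : Fin N → ℝ, ∀ i j, i ≠ j → (diagonal z - B) i j ≤ 0 := fun z i j hij => by
    simpa [diagonal_apply_ne _ hij] using hBnn i j
  congr 1
  ext v
  constructor
  · rintro ⟨z, -, hz, rfl⟩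
    obtain ⟨t, x, hx, hAx⟩ := hB.exists_pos_eigenvector_diagonal_sub z
    obtain rfl : t = 0 :=
      (isLeast_re_spectrum_of_pos_eigenvector (hZ z) hx hAx).csInf_eq.symm.trans hz
    rw [zero_smul, diagonal_sub_mulVec_eq_zero_iff fun i => (hx i).ne'] at hAx
    exact ⟨x, hx, by rw [hAx, sum_mul_mulVec_div]⟩
  · rintro ⟨x, hx, rfl⟩
    set z := fun i => (B *ᵥ x) i / x i
    have hAx : (diagonal z - B) *ᵥ x = (0 : ℝ) • x := by
      rw [zero_smul, diagonal_sub_mulVec_eq_zero_iff fun i => (hx i).ne']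
    refine ⟨z, fun i => div_nonneg ?_ (hx i).le,
      (isLeast_re_spectrum_of_pos_eigenvector (hZ z) hx hAx).csInf_eq,
      (sum_mul_mulVec_div h x B).symm⟩
    exact dotProduct_nonneg_of_nonneg (hBnn i) fun j => (hx j).le

theorem statement19 {N : ℕ} (hN : 2 ≤ N)
    (B : Matrix (Fin N) (Fin N) ℝ) (hBnn : ∀ i j, 0 ≤ B i j) (hBirr : MatIrred B)
    (h : Fin N → ℝ) (hh : ∀ i, 0 < h i) :
    sInf {v | ∃ z : Fin N → ℝ, (∀ i, 0 ≤ z i) ∧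
        sInf (Complex.re '' spectrum ℂ ((Matrix.diagonal z - B).map Complex.ofReal)) = 0 ∧
        v = ∑ i, h i * z i} =
      sInf {v | ∃ x : Fin N → ℝ, (∀ i, 0 < x i) ∧
        v = ∑ i, ∑ j, h i * B i j * x j / x i} :=
  statement19_general hN B hBnn hBirr h
end
end
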